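/- Let X be a Tychonoff (completely regular Hausdorff) topological space with at least two points, and let B be a basis for the topology of X. Then there exists a dominating set D of the annihilating-ideal graph of C(X) (i.e., D ⊆ A(X) such that for every I ∈ A(X) ∖ D there exists J ∈ D with I ≠ J and I·J = {0}) whose cardinality is at most the cardinality of B. (Consequently, the dominating number of the annihilating-ideal graph of C(X) is at most the weight of X.) -/
import Mathlib


open Set Cardinal

/-- `annIdeal I` is `Ann(I)`, the annihilator of the ideal `I` of `C(X, ℝ)`. -/
def annIdeal {X : Type*} [TopologicalSpace X] (I : Ideal C(X, ℝ)) : Ideal C(X, ℝ) where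
  carrier := {g | ∀ f ∈ I, g * f = 0}
  add_mem' := by
    intro a b ha hb f hf
    rw [add_mul, ha f hf, hb f hf, add_zero]
  zero_mem' := fun f _ => zero_mul f
  smul_mem' := by
    intro c g hg f hf
    rw [smul_eq_mul, mul_assoc, hg f hf, mul_zero]

/-- `annSet X` is `A(X)`: the set of nonzero ideals of `C(X, ℝ)` with nonzero annihilator. -/
def annSet (X : Type*) [TopologicalSpace X] : Set (Ideal C(X, ℝ)) :=
  {I | I ≠ ⊥ ∧ annIdeal I ≠ ⊥}

/-- `vanishIdeal U` is the ideal of continuous functions vanishing outside `U`. -/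
def vanishIdeal {X : Type*} [TopologicalSpace X] (U : Set X) : Ideal C(X, ℝ) where
  carrier := {h | ∀ y ∉ U, h y = 0}
  add_mem' := by
    intro a b ha hb y hy
    simp [ha y hy, hb y hy]
  zero_mem' := fun y _ => rfl
  smul_mem' := by
    intro c g hg y hy
    simp [hg y hy]

lemma exists_one_zero {X : Type*} [TopologicalSpace X] [T35Space X]
    {U : Set X} (hU : IsOpen U) {x : X} (hx : x ∈ U) :
    ∃ h : C(X, ℝ), h x = 1 ∧ ∀ y ∉ U, h y = 0 := by
  obtain ⟨f, cf, hf0, hf1⟩ :=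
    CompletelyRegularSpace.completely_regular x Uᶜ hU.isClosed_compl (by simp [hx])
  refine ⟨1 - ⟨fun y => (f y : ℝ), by continuity⟩, ?_, ?_⟩
  · simp [hf0]
  · intro y hy
    have : f y = 1 := hf1 hy
    simp [this]

/-- If `B` is a basis of a Tychonoff space `X` with at least two points, then the
annihilating-ideal graph of `C(X)` has a dominating set of cardinality at most `#B`.
(Hence the dominating number of the graph is at most the weight of `X`.) -/
theorem dominating_le_weight {X : Type*} [TopologicalSpace X] [T35Space X] [Nontrivial X]
    (B : Set (Set X)) (hB : TopologicalSpace.IsTopologicalBasis B) :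
    ∃ D : Set (Ideal C(X, ℝ)), D ⊆ annSet X ∧
      (∀ I ∈ annSet X, I ∉ D → ∃ J ∈ D, I ≠ J ∧ I * J = ⊥) ∧
      #D ≤ #B := by
  refine ⟨(vanishIdeal '' B) ∩ annSet X, inter_subset_right, ?_, ?_⟩
  · intro I hI hID
    obtain ⟨hIbot, hAnn⟩ := hI
    obtain ⟨g, hgI, hg0⟩ := Submodule.exists_mem_ne_zero_of_ne_bot hAnn
    obtain ⟨f0, hf0I, hf00⟩ := Submodule.exists_mem_ne_zero_of_ne_bot hIbot
    -- find x with g x ≠ 0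
    have : ∃ x : X, g x ≠ 0 := by
      by_contra h
      push_neg at h
      exact hg0 (ContinuousMap.ext fun x => h x)
    obtain ⟨x, hgx⟩ := this
    -- basic open set around x inside {g ≠ 0}
    have hopen : IsOpen {y | g y ≠ 0} := isOpen_ne.preimage g.continuous
    obtain ⟨U, hUB, hxU, hUsub⟩ := hB.exists_subset_of_mem_open hgx hopen
    have hUopen : IsOpen U := hB.isOpen hUB
    -- every f ∈ I vanishes on U
    have hIvan : ∀ f ∈ I, ∀ y ∈ U, f y = 0 := by
      intro f hf y hy
      have h1 : g * f = 0 := hgI f hf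
      have h2 : g y * f y = 0 := by
        have := congrFun (congrArg DFunLike.coe h1) y
        simpa using this
      exact (mul_eq_zero.mp h2).resolve_left (hUsub hy)
    have hJann : vanishIdeal U ∈ annSet X := by
      constructor
      · -- nonzero: use complete regularity
        obtain ⟨h, hh1, hh0⟩ := exists_one_zero hUopen hxU
        refine Submodule.ne_bot_iff _ |>.mpr ⟨h, hh0, ?_⟩
        intro hc
        rw [hc] at hh1
        simp at hh1
      · -- annihilator contains f0 ≠ 0
        refine Submodule.ne_bot_iff _ |>.mpr ⟨f0, ?_, hf00⟩
        intro h hh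
        ext y
        by_cases hy : y ∈ U
        · simp [hIvan f0 hf0I y hy]
        · simp [hh y hy]
    refine ⟨vanishIdeal U, ⟨mem_image_of_mem _ hUB, hJann⟩, ?_, ?_⟩
    · rintro rfl; exact hID ⟨mem_image_of_mem _ hUB, hJann⟩
    · rw [eq_bot_iff, Ideal.mul_le]
      intro f hf h hh
      have : f * h = 0 := by
        ext y
        by_cases hy : y ∈ U
        · simp [hIvan f hf y hy]
        · simp [hh y hy]
      simp [this]
  · exact (mk_le_mk_of_subset inter_subset_left).trans (mk_image_le)
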